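/- For every positive integer n ≡ 1 (mod 3) and every cell c of the n×n×n cube, the cube with c removed can be tiled by three-dimensional trominoes. -/

import Mathlib

/-!
The proof is an induction `n → n + 3` starting from `n = 1` and `n = 4`. Reflections in the
mid-planes of the `(n + 3)`-cube move the missing cell into the corner `n`-cube, which is tiled by
induction. The rest of the `(n + 3)`-cube is a shell made of three slabs of thickness `3`, and every
`3 × b × c` box with `b, c ≥ 2` is tiled by `3 × 2 × 1` bricks and a `3 × 3 × 3` cube. For `n = 4`
the missing cell is moved into the corner `2 × 2 × 2` cube, and the four orbits of its cells under
cyclic permutation of the coordinates are handled by explicit tilings.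
-/

/-- Standard basis vectors of `ℤ³`. -/
def e3 : Fin 3 → ℤ × ℤ × ℤ
  | 0 => (1, 0, 0)
  | 1 => (0, 1, 0)
  | 2 => (0, 0, 1)

/-- A 3D L-tromino: a cell together with two cells adjacent to it along two
different coordinate axes (equivalently, a translate/axis-rotation of
`{(0,0,0),(1,0,0),(0,1,0)}`). -/
def IsTromino3 (s : Finset (ℤ × ℤ × ℤ)) : Prop :=
  ∃ (c : ℤ × ℤ × ℤ) (i j : Fin 3) (ε₁ ε₂ : ℤ), i ≠ j ∧
    (ε₁ = 1 ∨ ε₁ = -1) ∧ (ε₂ = 1 ∨ ε₂ = -1) ∧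
    s = {c, c + ε₁ • e3 i, c + ε₂ • e3 j}

/-- The axis-aligned box `[0,a) × [0,b) × [0,c)` in `ℤ³`. -/
noncomputable def box (a b c : ℕ) : Finset (ℤ × ℤ × ℤ) :=
  (Finset.Ico (0 : ℤ) a) ×ˢ (Finset.Ico (0 : ℤ) b) ×ˢ (Finset.Ico (0 : ℤ) c)

/-- `T` is a tiling of the region `R` by 3D trominoes: the trominoes are
pairwise disjoint and their union is exactly `R`. -/
def IsTiling3 (R : Finset (ℤ × ℤ × ℤ)) (T : Finset (Finset (ℤ × ℤ × ℤ))) : Prop :=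
  (∀ t ∈ T, IsTromino3 t) ∧
    (∀ t₁ ∈ T, ∀ t₂ ∈ T, t₁ ≠ t₂ → Disjoint t₁ t₂) ∧
    (∀ x, x ∈ R ↔ ∃ t ∈ T, x ∈ t)

open Finset hiding box
open Function

def Tileable (R : Finset (ℤ × ℤ × ℤ)) : Prop := ∃ T, IsTiling3 R T

theorem tileable_empty : Tileable ∅ :=
  ⟨∅, by simp [IsTiling3]⟩

theorem IsTiling3.subset {R T} (hT : IsTiling3 R T) {t} (ht : t ∈ T) : t ⊆ R :=
  fun _ hx => (hT.2.2 _).2 ⟨t, ht, hx⟩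

theorem Tileable.union {R S} (hRS : Disjoint R S) (hR : Tileable R) (hS : Tileable S) :
    Tileable (R ∪ S) := by
  obtain ⟨T₁, hT₁⟩ := hR
  obtain ⟨T₂, hT₂⟩ := hS
  refine ⟨T₁ ∪ T₂, ?_, ?_, fun x => ?_⟩
  · simp only [mem_union]
    rintro t (ht | ht)
    exacts [hT₁.1 t ht, hT₂.1 t ht]
  · simp only [mem_union]
    rintro t₁ (h₁ | h₁) t₂ (h₂ | h₂) hne
    · exact hT₁.2.1 t₁ h₁ t₂ h₂ hne
    · exact hRS.mono (hT₁.subset h₁) (hT₂.subset h₂)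
    · exact hRS.symm.mono (hT₂.subset h₁) (hT₁.subset h₂)
    · exact hT₂.2.1 t₁ h₁ t₂ h₂ hne
  · simp only [mem_union, hT₁.2.2 x, hT₂.2.2 x, or_and_right, exists_or]

theorem isTromino3_iff_exists_mem {s : Finset (ℤ × ℤ × ℤ)} : IsTromino3 s ↔
    ∃ c ∈ s, ∃ i j : Fin 3, ∃ ε₁ ∈ ({1, -1} : Finset ℤ), ∃ ε₂ ∈ ({1, -1} : Finset ℤ),
      i ≠ j ∧ s = {c, c + ε₁ • e3 i, c + ε₂ • e3 j} := by
  constructor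
  · rintro ⟨c, i, j, ε₁, ε₂, hij, hε₁, hε₂, rfl⟩
    exact ⟨c, by simp, i, j, ε₁, by simpa using hε₁, ε₂, by simpa using hε₂, hij, rfl⟩
  · rintro ⟨c, -, i, j, ε₁, hε₁, ε₂, hε₂, hij, rfl⟩
    exact ⟨c, i, j, ε₁, ε₂, hij, by simpa using hε₁, by simpa using hε₂, rfl⟩

instance : DecidablePred IsTromino3 := fun _ => decidable_of_iff _ isTromino3_iff_exists_mem.symm

theorem isTiling3_iff_eq_biUnion {R : Finset (ℤ × ℤ × ℤ)} {T : Finset (Finset (ℤ × ℤ × ℤ))} :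
    IsTiling3 R T ↔ (∀ t ∈ T, IsTromino3 t) ∧
      (∀ t₁ ∈ T, ∀ t₂ ∈ T, t₁ ≠ t₂ → Disjoint t₁ t₂) ∧ R = T.biUnion id := by
  simp only [IsTiling3, Finset.ext_iff, mem_biUnion, id]

instance {R T} : Decidable (IsTiling3 R T) := decidable_of_iff _ isTiling3_iff_eq_biUnion.symm

/-- The maps `x ↦ a + P x` with `P` a signed permutation matrix, i.e. the isometries of `ℤ³`. -/
def IsLatticeIsometry (f : ℤ × ℤ × ℤ → ℤ × ℤ × ℤ) : Prop :=
  Injective f ∧ ∃ σ : Fin 3 → Fin 3, Injective σ ∧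
    ∀ i, ∃ δ : ℤ, (δ = 1 ∨ δ = -1) ∧ ∀ x t, f (x + t • e3 i) = f x + (t * δ) • e3 (σ i)

theorem IsTromino3.image {f} (hf : IsLatticeIsometry f) {s} (hs : IsTromino3 s) :
    IsTromino3 (s.image f) := by
  obtain ⟨-, σ, hσ, hδ⟩ := hf
  obtain ⟨c, i, j, ε₁, ε₂, hij, hε₁, hε₂, rfl⟩ := hs
  obtain ⟨δ₁, hδ₁, hf₁⟩ := hδ i
  obtain ⟨δ₂, hδ₂, hf₂⟩ := hδ j
  refine ⟨f c, σ i, σ j, ε₁ * δ₁, ε₂ * δ₂, hσ.ne hij, ?_, ?_, ?_⟩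
  · rcases hε₁ with rfl | rfl <;> rcases hδ₁ with rfl | rfl <;> norm_num
  · rcases hε₂ with rfl | rfl <;> rcases hδ₂ with rfl | rfl <;> norm_num
  · simp only [image_insert, image_singleton, hf₁, hf₂]

theorem Tileable.image {f} (hf : IsLatticeIsometry f) {R} (hR : Tileable R) :
    Tileable (R.image f) := by
  obtain ⟨T, hT⟩ := hR
  refine ⟨T.image (Finset.image f), ?_, ?_, fun x => ?_⟩
  · simp only [mem_image]
    rintro _ ⟨t, ht, rfl⟩
    exact (hT.1 t ht).image hf
  · simp only [mem_image]
    rintro _ ⟨t₁, h₁, rfl⟩ _ ⟨t₂, h₂, rfl⟩ hne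
    exact (disjoint_image hf.1).2 (hT.2.1 t₁ h₁ t₂ h₂ fun h => hne (h ▸ rfl))
  · constructor
    · rintro hx
      obtain ⟨y, hy, rfl⟩ := mem_image.1 hx
      obtain ⟨t, ht, hyt⟩ := (hT.2.2 y).1 hy
      exact ⟨t.image f, mem_image_of_mem _ ht, mem_image_of_mem f hyt⟩
    · rintro ⟨_, hft, hx⟩
      obtain ⟨t, ht, rfl⟩ := mem_image.1 hft
      obtain ⟨y, hy, rfl⟩ := mem_image.1 hx
      exact mem_image_of_mem f ((hT.2.2 y).2 ⟨t, ht, hy⟩)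

theorem isLatticeIsometry_add_mul {a s : ℤ × ℤ × ℤ} (hs : s * s = 1) :
    IsLatticeIsometry (a + s * ·) := by
  refine ⟨(add_right_injective a).comp (IsUnit.of_mul_eq_one s hs).mul_right_injective,
    id, injective_id, fun i => ?_⟩
  obtain ⟨s₁, s₂, s₃⟩ := s
  simp only [Prod.mk_mul_mk, Prod.ext_iff, Prod.fst_one, Prod.snd_one] at hs
  obtain ⟨h₁, h₂, h₃⟩ := hs
  have hshift (x : ℤ × ℤ × ℤ) (t : ℤ) (i : Fin 3) (δ : ℤ)
      (hδ : (s₁, s₂, s₃) * e3 i = δ • e3 i) :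
      a + (s₁, s₂, s₃) * (x + t • e3 i) = a + (s₁, s₂, s₃) * x + (t * δ) • e3 i := by
    rw [mul_add, mul_smul_comm, hδ, smul_smul, add_assoc]
  match i with
  | 0 => exact ⟨s₁, mul_self_eq_one_iff.1 h₁, fun x t => hshift x t 0 s₁ (by simp [e3])⟩
  | 1 => exact ⟨s₂, mul_self_eq_one_iff.1 h₂, fun x t => hshift x t 1 s₂ (by simp [e3])⟩
  | 2 => exact ⟨s₃, mul_self_eq_one_iff.1 h₃, fun x t => hshift x t 2 s₃ (by simp [e3])⟩

def rot (p : ℤ × ℤ × ℤ) : ℤ × ℤ × ℤ := (p.2.1, p.2.2, p.1)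

theorem isLatticeIsometry_rot : IsLatticeIsometry rot := by
  refine ⟨fun x y hxy => ?_, ![2, 0, 1], by decide, fun i => ⟨1, Or.inl rfl, fun x t => ?_⟩⟩
  · simp only [rot, Prod.mk.injEq] at hxy
    exact Prod.ext hxy.2.2 (Prod.ext hxy.1 hxy.2.1)
  · fin_cases i <;> simp [rot, e3]

theorem isLatticeIsometry_add_left (v : ℤ × ℤ × ℤ) : IsLatticeIsometry (v + ·) := by
  simpa using isLatticeIsometry_add_mul (a := v) (mul_one 1)

theorem Tileable.erase_image {f} (hf : IsLatticeIsometry f) {B : Finset (ℤ × ℤ × ℤ)}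
    (hB : B.image f = B) {c} (h : Tileable (B.erase c)) : Tileable (B.erase (f c)) := by
  simpa [image_erase hf.1, hB] using h.image hf

theorem mem_box {a b c : ℕ} {x : ℤ × ℤ × ℤ} :
    x ∈ box a b c ↔ 0 ≤ x.1 ∧ x.1 < a ∧ 0 ≤ x.2.1 ∧ x.2.1 < b ∧ 0 ≤ x.2.2 ∧ x.2.2 < c := by
  simp [box, and_assoc]

theorem box_subset_box {a b c a' b' c' : ℕ} (ha : a ≤ a') (hb : b ≤ b') (hc : c ≤ c') :
    box a b c ⊆ box a' b' c' := by
  intro x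
  simp only [mem_box]
  omega

theorem image_rot_box (a b c : ℕ) : (box a b c).image rot = box b c a := by
  ext ⟨x, y, z⟩
  simp only [mem_image, mem_box, rot]
  constructor
  · rintro ⟨⟨p, q, r⟩, hp, h⟩
    simp only [Prod.mk.injEq] at h hp
    omega
  · intro h
    exact ⟨(z, x, y), by dsimp only; omega, rfl⟩

section Boxes

variable {a b c a' b' c' : ℕ}

theorem Tileable.box_sdiff_box_rot {p q r : ℕ} (h : Tileable (box a b c \ box p q r)) :
    Tileable (box b c a \ box q r p) := by
  simpa [image_sdiff _ _ isLatticeIsometry_rot.1, image_rot_box] using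
    h.image isLatticeIsometry_rot

theorem Tileable.box_add_sdiff {K : Finset (ℤ × ℤ × ℤ)} (hK : K ⊆ box a b c)
    (h : Tileable (box a b c \ K)) (h' : Tileable (box a' b c)) :
    Tileable (box (a + a') b c \ K) := by
  have hsplit : box (a + a') b c \ K =
      (box a b c \ K) ∪ (box a' b c).image (((a : ℤ), 0, 0) + ·) := by
    ext x
    simp only [mem_sdiff, mem_union, mem_box, image_add_left, mem_preimage, Prod.neg_mk, neg_zero,
      Prod.fst_add, Prod.snd_add, Nat.cast_add, zero_add]
    by_cases hx : x ∈ K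
    · have := (mem_box.1 (hK hx)).2.1
      simp only [hx, not_true_eq_false, and_false, false_or, false_iff, not_and, not_lt]
      omega
    · simp only [hx, not_false_eq_true, and_true]
      omega
  rw [hsplit]
  refine Tileable.union ?_ h (h'.image (isLatticeIsometry_add_left _))
  rw [disjoint_left]
  intro x hx hx'
  simp only [mem_sdiff, mem_box, image_add_left, mem_preimage, Prod.neg_mk, neg_zero, Prod.fst_add,
    Prod.snd_add, zero_add] at hx hx'
  omega

theorem Tileable.box_add (h : Tileable (box a b c)) (h' : Tileable (box a' b c)) :
    Tileable (box (a + a') b c) := by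
  simpa using (show Tileable (box a b c \ ∅) by simpa).box_add_sdiff (empty_subset _) h'

theorem Tileable.box_rot (h : Tileable (box a b c)) : Tileable (box b c a) := by
  simpa [image_rot_box] using h.image isLatticeIsometry_rot


set_option maxRecDepth 100000 in
theorem tileable_box_three_two_one : Tileable (box 3 2 1) :=
  ⟨{{(0, 0, 0), (0, 1, 0), (1, 0, 0)}, {(1, 1, 0), (2, 0, 0), (2, 1, 0)}}, by decide⟩

set_option maxRecDepth 100000 in
theorem tileable_box_three_three_three : Tileable (box 3 3 3) :=
  ⟨{{(0, 0, 0), (0, 1, 0), (1, 0, 0)}, {(0, 0, 1), (0, 0, 2), (1, 0, 1)},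
    {(0, 1, 1), (0, 2, 1), (1, 1, 1)}, {(0, 1, 2), (0, 2, 2), (1, 1, 2)},
    {(0, 2, 0), (1, 1, 0), (1, 2, 0)}, {(1, 0, 2), (2, 0, 2), (2, 1, 2)},
    {(1, 2, 1), (1, 2, 2), (2, 2, 2)}, {(2, 0, 0), (2, 0, 1), (2, 1, 0)},
    {(2, 1, 1), (2, 2, 0), (2, 2, 1)}}, by decide⟩

theorem Tileable.box_mul_left (h : Tileable (box a b c)) (p : ℕ) : Tileable (box (p * a) b c) := by
  induction p with
  | zero => simpa [box] using tileable_empty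
  | succ p ih => simpa [add_mul] using ih.box_add h

theorem Tileable.box_mul (h : Tileable (box a b c)) (p q r : ℕ) :
    Tileable (box (p * a) (q * b) (r * c)) :=
  (((h.box_mul_left p).box_rot.box_mul_left q).box_rot.box_mul_left r).box_rot

theorem Tileable.box_add_y (h : Tileable (box a b c)) (h' : Tileable (box a b' c)) :
    Tileable (box a (b + b') c) :=
  (h.box_rot.box_add h'.box_rot).box_rot.box_rot

theorem Tileable.box_add_z (h : Tileable (box a b c)) (h' : Tileable (box a b c')) :
    Tileable (box a b (c + c')) :=
  (h.box_rot.box_rot.box_add h'.box_rot.box_rot).box_rot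

theorem tileable_box_three_two_mul (q c : ℕ) : Tileable (box 3 (2 * q) c) := by
  simpa [mul_comm] using tileable_box_three_two_one.box_mul 1 q c

theorem tileable_box_three_three (hc : 2 ≤ c) : Tileable (box 3 3 c) := by
  have h_even (r : ℕ) : Tileable (box 3 3 (2 * r)) := by
    simpa [mul_comm] using (tileable_box_three_two_mul 1 3).box_rot.box_rot.box_mul 1 1 r
  obtain ⟨r, rfl | rfl⟩ : ∃ r, c = 2 * r ∨ c = 3 + 2 * r := ⟨c / 2 - c % 2, by omega⟩
  exacts [h_even r, tileable_box_three_three_three.box_add_z (h_even r)]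

theorem tileable_box_three (hb : 2 ≤ b) (hc : 2 ≤ c) : Tileable (box 3 b c) := by
  obtain ⟨q, rfl | rfl⟩ : ∃ q, b = 2 * q ∨ b = 3 + 2 * q := ⟨b / 2 - b % 2, by omega⟩
  exacts [tileable_box_three_two_mul q c,
    (tileable_box_three_three hc).box_add_y (tileable_box_three_two_mul q c)]

/-- The shell is built from three slabs of thickness 3, each added along the first axis and
followed by a rotation of the coordinates. -/
theorem tileable_box_add_three_sdiff_box {n : ℕ} (hn : 2 ≤ n) :
    Tileable (box (n + 3) (n + 3) (n + 3) \ box n n n) := by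
  have h₀ : Tileable (box n n n \ box n n n) := by simpa using tileable_empty
  have h₁ := (h₀.box_add_sdiff subset_rfl (tileable_box_three hn hn)).box_sdiff_box_rot
  have h₂ := (h₁.box_add_sdiff (box_subset_box le_rfl le_rfl (by omega))
    (tileable_box_three hn (by omega))).box_sdiff_box_rot
  exact h₂.box_add_sdiff (box_subset_box le_rfl (by omega) (by omega))
    (tileable_box_three (by omega) (by omega))

end Boxes

theorem exists_reflection_mem_Ico {N m : ℕ} (hNm : N ≤ 2 * m) {x : ℤ}
    (hx : x ∈ Ico (0 : ℤ) N) : ∃ a s : ℤ, s * s = 1 ∧ a + s * a = 0 ∧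
      (∀ y ∈ Ico (0 : ℤ) N, a + s * y ∈ Ico (0 : ℤ) N) ∧ a + s * x ∈ Ico (0 : ℤ) m := by
  rw [mem_Ico] at hx
  by_cases hxm : x < m
  · exact ⟨0, 1, by norm_num, by norm_num, by simp, by simp [hx.1, hxm]⟩
  · refine ⟨N - 1, -1, by norm_num, by ring, fun y hy => ?_, ?_⟩
    · rw [mem_Ico] at hy ⊢
      omega
    · rw [mem_Ico]
      omega

theorem exists_reflection_mem_box {N m : ℕ} (hNm : N ≤ 2 * m) {c : ℤ × ℤ × ℤ}
    (hc : c ∈ box N N N) : ∃ a s : ℤ × ℤ × ℤ, s * s = 1 ∧ a + s * a = 0 ∧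
      (∀ p ∈ box N N N, a + s * p ∈ box N N N) ∧ a + s * c ∈ box m m m := by
  simp only [box, mem_product] at hc
  obtain ⟨a₁, s₁, hs₁, ha₁, hN₁, hm₁⟩ := exists_reflection_mem_Ico hNm hc.1
  obtain ⟨a₂, s₂, hs₂, ha₂, hN₂, hm₂⟩ := exists_reflection_mem_Ico hNm hc.2.1
  obtain ⟨a₃, s₃, hs₃, ha₃, hN₃, hm₃⟩ := exists_reflection_mem_Ico hNm hc.2.2
  refine ⟨(a₁, a₂, a₃), (s₁, s₂, s₃), by simp [hs₁, hs₂, hs₃], by simp [ha₁, ha₂, ha₃],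
    fun p hp => ?_, ?_⟩
  · simp only [box, mem_product] at hp
    exact mem_product.2 ⟨hN₁ _ hp.1, mem_product.2 ⟨hN₂ _ hp.2.1, hN₃ _ hp.2.2⟩⟩
  · exact mem_product.2 ⟨hm₁, mem_product.2 ⟨hm₂, hm₃⟩⟩

def DeficientCubeTileable (n : ℕ) : Prop := ∀ c ∈ box n n n, Tileable ((box n n n).erase c)

theorem DeficientCubeTileable.of_forall_mem_box {N m : ℕ} (hNm : N ≤ 2 * m)
    (h : ∀ c ∈ box m m m, Tileable ((box N N N).erase c)) : DeficientCubeTileable N := by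
  intro c hc
  obtain ⟨a, s, hs, ha, hmaps, hcm⟩ := exists_reflection_mem_box hNm hc
  have hinj := (isLatticeIsometry_add_mul (a := a) hs).1
  have hB : (box N N N).image (a + s * ·) = box N N N :=
    eq_of_subset_of_card_le (image_subset_iff.2 hmaps) (card_image_of_injective _ hinj).ge
  have := (h _ hcm).erase_image (isLatticeIsometry_add_mul hs) hB
  rwa [show a + s * (a + s * c) = c by linear_combination ha + c * hs] at this

theorem DeficientCubeTileable.add_three {n : ℕ} (hn : 3 ≤ n) (h : DeficientCubeTileable n) :
    DeficientCubeTileable (n + 3) := by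
  refine .of_forall_mem_box (m := n) (by omega) fun c hc => ?_
  have hsub : box n n n ⊆ box (n + 3) (n + 3) (n + 3) :=
    box_subset_box (by omega) (by omega) (by omega)
  have hsplit : (box (n + 3) (n + 3) (n + 3)).erase c =
      (box n n n).erase c ∪ (box (n + 3) (n + 3) (n + 3) \ box n n n) := by
    conv_lhs => rw [← union_sdiff_of_subset hsub, erase_union_distrib,
      erase_eq_of_notMem fun h => (mem_sdiff.1 h).2 hc]
  rw [hsplit]
  exact (h c hc).union (disjoint_sdiff.mono_left (erase_subset _ _))
    (tileable_box_add_three_sdiff_box (by omega))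

theorem deficientCubeTileable_one : DeficientCubeTileable 1 := by
  have h : box 1 1 1 = {0} := by decide
  intro c hc
  rw [h, mem_singleton] at hc
  simpa [h, hc] using tileable_empty

set_option maxRecDepth 100000 in
theorem tileable_box_four_erase_corner : Tileable ((box 4 4 4).erase (0, 0, 0)) :=
    ⟨{{(0, 0, 1), (0, 1, 1), (1, 0, 1)}, {(0, 0, 2), (0, 1, 2), (1, 0, 2)},
      {(0, 0, 3), (0, 1, 3), (1, 0, 3)}, {(0, 1, 0), (0, 2, 0), (1, 1, 0)},
      {(0, 2, 1), (0, 3, 1), (1, 2, 1)}, {(0, 2, 2), (0, 3, 2), (1, 2, 2)},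
      {(0, 2, 3), (0, 3, 3), (1, 2, 3)}, {(0, 3, 0), (1, 2, 0), (1, 3, 0)},
      {(1, 0, 0), (2, 0, 0), (2, 1, 0)}, {(1, 1, 1), (1, 1, 2), (2, 1, 1)},
      {(1, 1, 3), (2, 1, 3), (2, 2, 3)}, {(1, 3, 1), (1, 3, 2), (2, 3, 1)},
      {(1, 3, 3), (2, 3, 2), (2, 3, 3)}, {(2, 0, 1), (2, 0, 2), (3, 0, 1)},
      {(2, 0, 3), (3, 0, 3), (3, 1, 3)}, {(2, 1, 2), (3, 0, 2), (3, 1, 2)},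
      {(2, 2, 0), (2, 3, 0), (3, 2, 0)}, {(2, 2, 1), (2, 2, 2), (3, 2, 2)},
      {(3, 0, 0), (3, 1, 0), (3, 1, 1)}, {(3, 2, 1), (3, 3, 0), (3, 3, 1)},
      {(3, 2, 3), (3, 3, 2), (3, 3, 3)}}, by decide⟩

set_option maxRecDepth 100000 in
theorem tileable_box_four_erase_edge : Tileable ((box 4 4 4).erase (1, 0, 0)) :=
    ⟨{{(0, 0, 0), (0, 0, 1), (0, 1, 0)}, {(0, 0, 2), (0, 1, 2), (1, 0, 2)},
      {(0, 0, 3), (0, 1, 3), (1, 0, 3)}, {(0, 1, 1), (0, 2, 1), (1, 1, 1)},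
      {(0, 2, 0), (0, 3, 0), (1, 2, 0)}, {(0, 2, 2), (0, 3, 2), (1, 2, 2)},
      {(0, 2, 3), (0, 3, 3), (1, 2, 3)}, {(0, 3, 1), (1, 2, 1), (1, 3, 1)},
      {(1, 0, 1), (2, 0, 1), (2, 1, 1)}, {(1, 1, 0), (2, 1, 0), (2, 2, 0)},
      {(1, 1, 2), (1, 1, 3), (2, 1, 2)}, {(1, 3, 0), (2, 3, 0), (2, 3, 1)},
      {(1, 3, 2), (1, 3, 3), (2, 3, 2)}, {(2, 0, 0), (3, 0, 0), (3, 1, 0)},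
      {(2, 0, 2), (2, 0, 3), (3, 0, 2)}, {(2, 1, 3), (3, 0, 3), (3, 1, 3)},
      {(2, 2, 1), (2, 2, 2), (3, 2, 1)}, {(2, 2, 3), (2, 3, 3), (3, 2, 3)},
      {(3, 0, 1), (3, 1, 1), (3, 1, 2)}, {(3, 2, 0), (3, 3, 0), (3, 3, 1)},
      {(3, 2, 2), (3, 3, 2), (3, 3, 3)}}, by decide⟩

set_option maxRecDepth 100000 in
theorem tileable_box_four_erase_face : Tileable ((box 4 4 4).erase (1, 1, 0)) :=
    ⟨{{(0, 0, 0), (0, 1, 0), (1, 0, 0)}, {(0, 0, 1), (0, 1, 1), (1, 0, 1)},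
      {(0, 0, 2), (0, 1, 2), (1, 0, 2)}, {(0, 0, 3), (0, 1, 3), (1, 0, 3)},
      {(0, 2, 0), (0, 3, 0), (1, 2, 0)}, {(0, 2, 1), (0, 3, 1), (1, 2, 1)},
      {(0, 2, 2), (0, 3, 2), (1, 2, 2)}, {(0, 2, 3), (0, 3, 3), (1, 2, 3)},
      {(1, 1, 1), (1, 1, 2), (2, 1, 1)}, {(1, 1, 3), (2, 1, 3), (2, 2, 3)},
      {(1, 3, 0), (1, 3, 1), (2, 3, 0)}, {(1, 3, 2), (1, 3, 3), (2, 3, 2)},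
      {(2, 0, 0), (2, 1, 0), (3, 0, 0)}, {(2, 0, 1), (2, 0, 2), (3, 0, 1)},
      {(2, 0, 3), (3, 0, 3), (3, 1, 3)}, {(2, 1, 2), (2, 2, 1), (2, 2, 2)},
      {(2, 2, 0), (3, 1, 0), (3, 2, 0)}, {(2, 3, 1), (3, 3, 0), (3, 3, 1)},
      {(2, 3, 3), (3, 2, 3), (3, 3, 3)}, {(3, 0, 2), (3, 1, 1), (3, 1, 2)},
      {(3, 2, 1), (3, 2, 2), (3, 3, 2)}}, by decide⟩

set_option maxRecDepth 100000 in
theorem tileable_box_four_erase_interior : Tileable ((box 4 4 4).erase (1, 1, 1)) :=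
    ⟨{{(0, 0, 0), (0, 1, 0), (1, 0, 0)}, {(0, 0, 1), (0, 1, 1), (1, 0, 1)},
      {(0, 0, 2), (0, 1, 2), (1, 0, 2)}, {(0, 0, 3), (0, 1, 3), (1, 0, 3)},
      {(0, 2, 0), (0, 3, 0), (1, 2, 0)}, {(0, 2, 1), (0, 3, 1), (1, 2, 1)},
      {(0, 2, 2), (0, 3, 2), (1, 2, 2)}, {(0, 2, 3), (0, 3, 3), (1, 2, 3)},
      {(1, 1, 0), (2, 1, 0), (2, 2, 0)}, {(1, 1, 2), (1, 1, 3), (2, 1, 2)},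
      {(1, 3, 0), (1, 3, 1), (2, 3, 0)}, {(1, 3, 2), (1, 3, 3), (2, 3, 2)},
      {(2, 0, 0), (2, 0, 1), (3, 0, 0)}, {(2, 0, 2), (2, 0, 3), (3, 0, 2)},
      {(2, 1, 1), (2, 2, 1), (2, 2, 2)}, {(2, 1, 3), (3, 0, 3), (3, 1, 3)},
      {(2, 2, 3), (2, 3, 3), (3, 2, 3)}, {(2, 3, 1), (3, 3, 0), (3, 3, 1)},
      {(3, 0, 1), (3, 1, 1), (3, 1, 2)}, {(3, 1, 0), (3, 2, 0), (3, 2, 1)},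
      {(3, 2, 2), (3, 3, 2), (3, 3, 3)}}, by decide⟩

theorem deficientCubeTileable_four : DeficientCubeTileable 4 := by
  have hrot (c) (h : Tileable ((box 4 4 4).erase c)) : Tileable ((box 4 4 4).erase (rot c)) :=
    h.erase_image isLatticeIsometry_rot (image_rot_box 4 4 4)
  refine .of_forall_mem_box (m := 2) le_rfl fun ⟨x, y, z⟩ hc => ?_
  simp only [mem_box] at hc
  obtain ⟨rfl | rfl, rfl | rfl, rfl | rfl⟩ :
      (x = 0 ∨ x = 1) ∧ (y = 0 ∨ y = 1) ∧ (z = 0 ∨ z = 1) := by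
    omega
  exacts [tileable_box_four_erase_corner, hrot _ tileable_box_four_erase_edge,
    hrot _ (hrot _ tileable_box_four_erase_edge), hrot _ (hrot _ tileable_box_four_erase_face),
    tileable_box_four_erase_edge, hrot _ tileable_box_four_erase_face,
    tileable_box_four_erase_face, tileable_box_four_erase_interior]

theorem deficientCubeTileable_three_mul_add_one (k : ℕ) : DeficientCubeTileable (3 * k + 1) := by
  induction k with
  | zero => exact deficientCubeTileable_one
  | succ k ih =>
    rcases k with _ | k
    · exact deficientCubeTileable_four
    · have := ih.add_three (by omega)
      rwa [show 3 * (k + 1) + 1 + 3 = 3 * (k + 1 + 1) + 1 by ring] at this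

theorem tile_singly_deficient_cube_general (n : ℕ) (h : n % 3 = 1)
    (c : ℤ × ℤ × ℤ) (hc : c ∈ box n n n) :
    ∃ T : Finset (Finset (ℤ × ℤ × ℤ)), IsTiling3 ((box n n n).erase c) T := by
  obtain ⟨k, rfl⟩ : ∃ k, n = 3 * k + 1 := ⟨n / 3, by omega⟩
  exact deficientCubeTileable_three_mul_add_one k c hc

/-- For every positive `n ≡ 1 (mod 3)`, every singly deficient `n×n×n` cube can
be tiled by 3D trominoes. -/
theorem tile_singly_deficient_cube (n : ℕ) (hn : 0 < n) (h : n % 3 = 1)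
    (c : ℤ × ℤ × ℤ) (hc : c ∈ box n n n) :
    ∃ T : Finset (Finset (ℤ × ℤ × ℤ)), IsTiling3 ((box n n n).erase c) T :=
  tile_singly_deficient_cube_general n h c hc
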